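/- A pseudoconnection ∇ on ξ is weakly flat (i.e., F^∇ = 0 and G^∇ = 0) if and only if its exterior derivative d^∇ is a chain 2-complex (i.e., d^∇∘d^∇∘d^∇ = 0 on Ω^k(ξ) for all k ≥ 0). -/
import Mathlib


/-!
Algebraic model of smooth forms with values in a vector bundle, following the paper's setup:
`R` plays the role of the ring `Ω⁰(M)` of smooth functions, `Ω k` of the `R`-module `Ω^k(M)`
of smooth `k`-forms, `S` of the `R`-module `Ω⁰(ξ)` of smooth sections of a vector bundle `ξ`,
and `Ω k ⊗[R] S` of `Ω^k(ξ) = Ω^k(M) ⊗_{Ω⁰(M)} Ω⁰(ξ)`.  A bundle homomorphism over the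
identity corresponds to an `R`-linear map `S →ₗ[R] S`; its induced action on `Ω^k(ξ)` is
`LinearMap.lTensor`.  `d0 : R →ₗ[ℝ] Ω 1` and `d k : Ω k →ₗ[ℝ] Ω (k+1)` model the exterior
derivative and `wedge` the wedge product of scalar forms.
-/

open TensorProduct

section PseudoConnections

variable {R : Type} [CommRing R] [Algebra ℝ R]
variable {Ω : ℕ → Type} [∀ k, AddCommGroup (Ω k)] [∀ k, Module R (Ω k)]
  [∀ k, Module ℝ (Ω k)] [∀ k, IsScalarTower ℝ R (Ω k)]
variable {S : Type} [AddCommGroup S] [Module R S] [Module ℝ S] [IsScalarTower ℝ R S]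

/-- The alternating product `β ∧_α ·  : Ω^l(ξ) → Ω^{k+l}(ξ)` induced by a bundle
homomorphism `α`, determined on generators by `β ∧_α (ω ⊗ s) = (β ∧ ω) ⊗ α s`.
Taking `α = LinearMap.id` gives the ordinary alternating product `∧`. -/
noncomputable def wedgeB (wedge : ∀ k l : ℕ, Ω k →ₗ[R] Ω l →ₗ[R] Ω (k + l))
    (k l : ℕ) (α : S →ₗ[R] S) (β : Ω k) : Ω l ⊗[R] S →ₗ[R] Ω (k + l) ⊗[R] S :=
  LinearMap.rTensor S (wedge k l β) ∘ₗ LinearMap.lTensor (Ω l) α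

/-- Cast between scalar form degrees. -/
noncomputable def mcast {a b : ℕ} (h : a = b) : Ω a ≃ₗ[ℝ] Ω b := by
  subst h; exact LinearEquiv.refl ℝ _

/-- Cast between bundle-valued form degrees. -/
noncomputable def ocast {a b : ℕ} (h : a = b) : Ω a ⊗[R] S ≃ₗ[ℝ] Ω b ⊗[R] S := by
  subst h; exact LinearEquiv.refl ℝ _

/-- `E^∇ = d^∇ ∘ ∇`. -/
noncomputable def Emap (nabla : S →ₗ[ℝ] Ω 1 ⊗[R] S)
    (D : ∀ k, Ω k ⊗[R] S →ₗ[ℝ] Ω (k+1) ⊗[R] S) : S → Ω 2 ⊗[R] S :=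
  fun s => D 1 (nabla s)

/-- `L^∇ = P ∘ ∇ − ∇ ∘ P`. -/
noncomputable def Lmap (P : S →ₗ[R] S) (nabla : S →ₗ[ℝ] Ω 1 ⊗[R] S) : S → Ω 1 ⊗[R] S :=
  fun s => LinearMap.lTensor (Ω 1) P (nabla s) - nabla (P s)

/-- The curvature form `F^∇ = P ∘ d^∇ ∘ ∇ − d^∇ ∘ P ∘ ∇ + d^∇ ∘ ∇ ∘ P`. -/
noncomputable def Fmap (P : S →ₗ[R] S) (nabla : S →ₗ[ℝ] Ω 1 ⊗[R] S)
    (D : ∀ k, Ω k ⊗[R] S →ₗ[ℝ] Ω (k+1) ⊗[R] S) : S → Ω 2 ⊗[R] S :=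
  fun s => LinearMap.lTensor (Ω 2) P (D 1 (nabla s)) - D 1 (LinearMap.lTensor (Ω 1) P (nabla s))
    + D 1 (nabla (P s))

/-- `G^∇ = d^∇ ∘ d^∇ ∘ ∇`. -/
noncomputable def Gmap (nabla : S →ₗ[ℝ] Ω 1 ⊗[R] S)
    (D : ∀ k, Ω k ⊗[R] S →ₗ[ℝ] Ω (k+1) ⊗[R] S) : S → Ω 3 ⊗[R] S :=
  fun s => D 2 (D 1 (nabla s))

/-- A pseudoconnection `∇` on `ξ` is weakly flat (`F^∇ = 0` and `G^∇ = 0`)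
if and only if its exterior derivative `d^∇` is a chain `2`-complex
(`d^∇∘d^∇∘d^∇ = 0` on `Ω^k(ξ)` for all `k ≥ 0`).  The hypothesis `hdet₂` expresses
the property of the smooth context that a bundle-valued `2`-form killed by wedging
with every exact `1`-form vanishes (every form is locally an `Ω⁰(M)`-combination of
products of exact forms). -/
theorem weakly_flat_iff_chain_two_complex
    (d0 : R →ₗ[ℝ] Ω 1) (d : ∀ k, Ω k →ₗ[ℝ] Ω (k+1))
    (wedge : ∀ k l : ℕ, Ω k →ₗ[R] Ω l →ₗ[R] Ω (k + l))
    -- the identification `Ω⁰(M) = Ω^0(M)` and the axioms of the smooth context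
    (e : R ≃ₗ[R] Ω 0)
    (hde : ∀ f : R, d 0 (e f) = d0 f)
    (hd0_one : d0 1 = 0)
    (hwedge_zero_left : ∀ (l : ℕ) (f : R) (ω : Ω l),
      wedge 0 l (e f) ω = mcast (show l = 0 + l by omega) (f • ω))
    (hdd : ∀ (k : ℕ) (ω : Ω k), d (k+1) (d k ω) = 0)
    (hd_wedge : ∀ (k l : ℕ) (ω : Ω k) (η : Ω l),
      d (k+l) (wedge k l ω η)
        = mcast (show (k+1)+l = (k+l)+1 by omega) (wedge (k+1) l (d k ω) η)
          + ((-1:ℤ)^k) • (show Ω (k+l+1) from wedge k (l+1) ω (d l η)))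
    (hassoc : ∀ (k l m : ℕ) (ω : Ω k) (η : Ω l) (ζ : Ω m),
      wedge (k+l) m (wedge k l ω η) ζ
        = mcast (show k+(l+m) = (k+l)+m by omega) (wedge k (l+m) ω (wedge l m η ζ)))
    -- the pseudoconnection with principal homomorphism `P`
    (P : S →ₗ[R] S) (nabla : S →ₗ[ℝ] Ω 1 ⊗[R] S)
    (hLeib : ∀ (f : R) (s : S), nabla (f • s) = d0 f ⊗ₜ[R] P s + f • nabla s)
    -- its exterior derivative, determined on generators
    (D : ∀ k, Ω k ⊗[R] S →ₗ[ℝ] Ω (k+1) ⊗[R] S)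
    (hD : ∀ (k : ℕ) (ω : Ω k) (s : S),
      D k (ω ⊗ₜ[R] s) = d k ω ⊗ₜ[R] P s
        + ((-1:ℤ)^k) • wedgeB wedge k 1 LinearMap.id ω (nabla s))
    (hdet2 : ∀ T : Ω 2 ⊗[R] S,
      (∀ f : R, wedgeB wedge 1 2 LinearMap.id (d0 f) T = 0) → T = 0) :
    ((∀ s : S, Fmap P nabla D s = 0) ∧ (∀ s : S, Gmap nabla D s = 0)) ↔
      (∀ (k : ℕ) (T : Ω k ⊗[R] S), D (k+2) (D (k+1) (D k T)) = 0) := by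

  classical
  have hW : ∀ (k l : ℕ) (α : S →ₗ[R] S) (β : Ω k) (η : Ω l) (t : S),
      wedgeB wedge k l α β (η ⊗ₜ[R] t) = wedge k l β η ⊗ₜ[R] α t := by
    intro k l α β η t
    simp [wedgeB]
  have tsmul : ∀ (n : ℕ) (z : ℤ) (ω : Ω n) (t : S),
      (z • ω) ⊗ₜ[R] t = z • (ω ⊗ₜ[R] t) := fun n z ω t =>
    map_zsmul ((TensorProduct.mk R (Ω n) S).flip t) z ω
  have hWP : ∀ (k l : ℕ) (β : Ω k) (x : Ω l ⊗[R] S),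
      wedgeB wedge k l P β x
        = wedgeB wedge k l LinearMap.id β (LinearMap.lTensor (Ω l) P x) := by
    intro k l β x
    simp only [wedgeB, LinearMap.coe_comp, Function.comp_apply, LinearMap.lTensor_id,
      LinearMap.id_coe, id_eq]
  have hWassoc : ∀ (k l : ℕ) (β : Ω k) (η : Ω l) (x : Ω 1 ⊗[R] S),
      wedgeB wedge (k+l) 1 LinearMap.id (wedge k l β η) x
        = wedgeB wedge k (l+1) LinearMap.id β (wedgeB wedge l 1 LinearMap.id η x) := by
    intro k l β η x
    induction x using TensorProduct.induction_on with
    | zero => simp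
    | tmul ζ u =>
        rw [hW, hW, hW, hassoc k l 1 β η ζ]
        rfl
    | add a b ha hb => simp only [map_add, ha, hb]
  have hDW1 : ∀ (k : ℕ) (β : Ω k) (x : Ω 1 ⊗[R] S),
      D (k+1) (wedgeB wedge k 1 LinearMap.id β x)
        = wedgeB wedge (k+1) 1 P (d k β) x
          + ((-1:ℤ)^k) • wedgeB wedge k 2 LinearMap.id β (D 1 x) := by
    intro k β x
    induction x using TensorProduct.induction_on with
    | zero => simp
    | tmul η t =>
        rw [hW, hD 1 η t]
        simp only [LinearMap.id_coe, id_eq, map_add, map_zsmul]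
        rw [hD (k+1) (wedge k 1 β η) t, hd_wedge k 1 β η,
          hWassoc k 1 β η (nabla t), hW, hW]
        simp only [show ∀ (pf : k+1+1 = k+1+1) (y : Ω (k+1+1)),
            mcast (Ω := Ω) pf y = y from fun _ _ => rfl]
        simp only [Nat.reduceAdd, add_tmul, tsmul, LinearMap.id_coe, id_eq]
        module
    | add a b ha hb =>
        simp only [map_add, ha, hb, smul_add]
        abel
  have hDW2 : ∀ (k : ℕ) (β : Ω k) (x : Ω 2 ⊗[R] S),
      D (k+2) (wedgeB wedge k 2 LinearMap.id β x)
        = wedgeB wedge (k+1) 2 P (d k β) x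
          + ((-1:ℤ)^k) • wedgeB wedge k 3 LinearMap.id β (D 2 x) := by
    intro k β x
    induction x using TensorProduct.induction_on with
    | zero => simp
    | tmul η t =>
        rw [hW, hD 2 η t]
        simp only [LinearMap.id_coe, id_eq, map_add, map_zsmul]
        rw [hD (k+2) (wedge k 2 β η) t, hd_wedge k 2 β η,
          hWassoc k 2 β η (nabla t), hW, hW]
        simp only [show ∀ (pf : k+1+2 = k+2+1) (y : Ω (k+1+2)),
            mcast (Ω := Ω) pf y = y from fun _ _ => rfl]
        simp only [Nat.reduceAdd, add_tmul, tsmul, LinearMap.id_coe, id_eq]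
        module
    | add a b ha hb =>
        simp only [map_add, ha, hb, smul_add]
        abel
  have hD3 : ∀ (k : ℕ) (ω : Ω k) (s : S),
      D (k+2) (D (k+1) (D k (ω ⊗ₜ[R] s)))
        = wedgeB wedge (k+1) 2 LinearMap.id (d k ω) (Fmap P nabla D s)
          + ((-1:ℤ)^k) • wedgeB wedge k 3 LinearMap.id ω (Gmap nabla D s) := by
    intro k ω s
    have hD2 : D (k+1) (D k (ω ⊗ₜ[R] s))
        = ((-1:ℤ)^k) • wedgeB wedge (k+1) 1 LinearMap.id (d k ω) (Lmap P nabla s)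
          + wedgeB wedge k 2 LinearMap.id ω (Emap nabla D s) := by
      rw [hD k ω s]
      simp only [map_add, map_zsmul]
      rw [hD (k+1) (d k ω) (P s), hdd k ω, hDW1 k ω (nabla s),
        hWP (k+1) 1 (d k ω) (nabla s)]
      simp only [Lmap, Emap, map_sub, zero_tmul, zero_add, smul_add, smul_sub, smul_smul]
      rw [show ((-1:ℤ)^k) * (-1:ℤ)^k = 1 by
        rw [← pow_add]; exact Even.neg_one_pow ⟨k, rfl⟩, one_smul]
      module
    rw [hD2]
    simp only [map_add, map_zsmul]
    rw [hDW1 (k+1) (d k ω) (Lmap P nabla s), hDW2 k ω (Emap nabla D s)]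
    have hddz : wedgeB wedge (k+1+1) 1 P (d (k+1) (d k ω)) (Lmap P nabla s) = 0 := by
      rw [hdd k ω]
      simp [wedgeB]
    rw [hddz, hWP (k+1) 2 (d k ω) (Emap nabla D s)]
    have hFeq : Fmap P nabla D s
        = LinearMap.lTensor (Ω 2) P (Emap nabla D s) - D 1 (Lmap P nabla s) := by
      simp only [Fmap, Emap, Lmap, map_sub]
      abel
    rw [hFeq]
    simp only [Gmap, Emap, map_sub, zero_add, smul_add, smul_sub, smul_smul]
    rw [show ((-1:ℤ)^k) * (-1:ℤ)^(k+1) = -1 by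
      rw [pow_succ, ← mul_assoc, ← pow_add, Even.neg_one_pow ⟨k, rfl⟩]; ring]
    module
  have hW0 : ∀ (f : R) (x : Ω 3 ⊗[R] S),
      wedgeB wedge 0 3 LinearMap.id (e f) x = f • x := by
    intro f x
    induction x using TensorProduct.induction_on with
    | zero => simp
    | tmul η t =>
        rw [hW, hwedge_zero_left 3 f η]
        rw [show ∀ (pf : (3:ℕ) = 0+3) (y : Ω 3), mcast (Ω := Ω) pf y = y from
          fun _ _ => rfl]
        simp [smul_tmul']
    | add a b ha hb => simp only [map_add, ha, hb, smul_add]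
  constructor
  · rintro ⟨hF, hG⟩ k T
    induction T using TensorProduct.induction_on with
    | zero => simp
    | tmul ω s =>
        rw [hD3 k ω s, hF s, hG s]
        simp
    | add a b ha hb => simp only [map_add, ha, hb, add_zero]
  · intro h
    have hG : ∀ s : S, Gmap nabla D s = 0 := by
      intro s
      have h0 := h 0 (e 1 ⊗ₜ[R] s)
      rw [hD3 0 (e 1) s, hde 1, hd0_one] at h0
      have hz : wedgeB wedge (0+1) 2 LinearMap.id (0 : Ω 1) (Fmap P nabla D s) = 0 := by
        simp [wedgeB]
      rw [hW0 1 (Gmap nabla D s)] at h0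
      simpa [hz] using h0
    have hF : ∀ s : S, Fmap P nabla D s = 0 := by
      intro s
      apply hdet2
      intro f
      have h0 := h 0 (e f ⊗ₜ[R] s)
      rw [hD3 0 (e f) s, hde f, hW0 f (Gmap nabla D s), hG s] at h0
      simpa using h0
    exact ⟨hF, hG⟩

end PseudoConnections
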